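/- (Heat semigroup contracts spectral variance) Let φ ∈ H¹(𝕋²) be mean-zero, nonzero, and let κ > 0 satisfy κ‖φ‖_{H¹}²/‖φ‖² ≤ 1/10. Then Var(X_{e^{κΔ}φ}) ≤ (‖φ‖²/‖e^{κΔ}φ‖²) Var(X_φ) ≤ (1 + C κ‖φ‖_{H¹}²/‖φ‖²) Var(X_φ) for an absolute constant C. -/

import Mathlib

/-- Squared Euclidean norm of a vector in ℝ². -/
noncomputable def sqnormv (v : Fin 2 → ℝ) : ℝ := ∑ i, (v i) ^ 2

/-- Total L² mass ‖φ‖² = Σ|φ̂(k)|² of φ given by its Fourier coefficients c. -/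
noncomputable def totalMass (c : (Fin 2 → ℤ) → ℂ) : ℝ := ∑' k : Fin 2 → ℤ, ‖c k‖ ^ 2

/-- Spectral distribution P_φ({k}) = |φ̂(k)|²/‖φ‖². -/
noncomputable def specP (c : (Fin 2 → ℤ) → ℂ) (k : Fin 2 → ℤ) : ℝ :=
  ‖c k‖ ^ 2 / totalMass c

/-- Spectral centroid E(X_φ) = Σ k P_φ({k}) ∈ ℝ². -/
noncomputable def specMean (c : (Fin 2 → ℤ) → ℂ) : Fin 2 → ℝ :=
  fun i => ∑' k : Fin 2 → ℤ, ((k i : ℝ)) * specP c k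

/-- Spectral variance Var(X_φ) = Σ |k − E(X_φ)|² P_φ({k}). -/
noncomputable def specVar (c : (Fin 2 → ℤ) → ℂ) : ℝ :=
  ∑' k : Fin 2 → ℤ, sqnormv (fun i => ((k i : ℝ)) - specMean c i) * specP c k

/-- Euclidean norm of an integer wavenumber. -/
noncomputable def znorm (k : Fin 2 → ℤ) : ℝ := Real.sqrt (sqnormv fun i => ((k i : ℝ)))

/-- The heat multiplier e^{-4π²κ|k|²}. -/
noncomputable def heatMul (κ : ℝ) (k : Fin 2 → ℤ) : ℝ :=
  Real.exp (-(4 * Real.pi ^ 2 * κ * znorm k ^ 2))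

/-- The H¹ energy 4π² Σ |k|²|φ̂(k)|² (normalized consistently with the heat multiplier). -/
noncomputable def H1sq (c : (Fin 2 → ℤ) → ℂ) : ℝ :=
  ∑' k : Fin 2 → ℤ, 4 * Real.pi ^ 2 * znorm k ^ 2 * ‖c k‖ ^ 2

/-! The damped spectral distribution is proportional to `e^{-8π²κ|k|²} |φ̂(k)|²`. Its centroid
minimises its second moment, so its variance is at most its second moment about the centroid of
`φ`; since the damping factor is at most `1`, that moment is at most `‖φ‖²/‖e^{κΔ}φ‖²` times
`Var(X_φ)`. For the ratio, `1 - e^{-2x} ≤ 2x` gives `‖φ‖² - ‖e^{κΔ}φ‖² ≤ 2κ‖φ‖²_{H¹} ≤ ‖φ‖²/5`,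
whence `‖φ‖²/‖e^{κΔ}φ‖² ≤ 1 + (5/2)κ‖φ‖²_{H¹}/‖φ‖²`. -/

open Real

lemma tsum_sq_sub_mean_mul_le {ι : Type*} {f w : ι → ℝ} (hw : HasSum w 1)
    (hfw : Summable fun i => f i * w i)
    (hf2w : Summable fun i => (f i - ∑' j, f j * w j) ^ 2 * w i) (t : ℝ) :
    ∑' i, (f i - ∑' j, f j * w j) ^ 2 * w i ≤ ∑' i, (f i - t) ^ 2 * w i := by
  set m := ∑' j, f j * w j
  have parallel_axis : ∑' i, (f i - t) ^ 2 * w i = ∑' i, (f i - m) ^ 2 * w i + (m - t) ^ 2 := by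
    have hsplit : (fun i => (f i - t) ^ 2 * w i) = fun i =>
        (f i - m) ^ 2 * w i + (2 * (m - t) * (f i * w i) + (m - t) * (-t - m) * w i) := by
      funext i; ring
    rw [hsplit, hf2w.tsum_add ((hfw.mul_left _).add (hw.summable.mul_left _)),
      (hfw.mul_left _).tsum_add (hw.summable.mul_left _), tsum_mul_left, tsum_mul_left,
      hw.tsum_eq]
    ring
  rw [parallel_axis]
  exact le_add_of_nonneg_right (sq_nonneg _)

lemma tsum_sqnormv_mul {ι : Type*} (f : ι → Fin 2 → ℝ) (w : ι → ℝ)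
    (h : ∀ i, Summable fun k => f k i ^ 2 * w k) :
    ∑' k, sqnormv (f k) * w k = ∑ i, ∑' k, f k i ^ 2 * w k := by
  simp only [sqnormv, Finset.sum_mul]
  exact Summable.tsum_finsetSum fun i _ => h i

lemma summable_sqnormv_mul {ι : Type*} (f : ι → Fin 2 → ℝ) (w : ι → ℝ)
    (h : ∀ i, Summable fun k => f k i ^ 2 * w k) :
    Summable fun k => sqnormv (f k) * w k := by
  simp only [sqnormv, Finset.sum_mul]
  exact summable_sum fun i _ => h i

lemma summable_mul_norm_sq_of_norm_le {ι : Type*} {c d : ι → ℂ} {w : ι → ℝ}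
    (hw : ∀ k, 0 ≤ w k) (hdc : ∀ k, ‖d k‖ ≤ ‖c k‖) (h : Summable fun k => w k * ‖c k‖ ^ 2) :
    Summable fun k => w k * ‖d k‖ ^ 2 :=
  h.of_nonneg_of_le (fun k => mul_nonneg (hw k) (sq_nonneg _)) fun k =>
    mul_le_mul_of_nonneg_left (pow_le_pow_left₀ (norm_nonneg _) (hdc k) 2) (hw k)

lemma div_le_one_add_of_sub_le {M N E : ℝ} (hM : 0 < M) (hE : 0 ≤ E) (hEM : 10 * E ≤ M)
    (hN : M - 2 * E ≤ N) : M / N ≤ 1 + 5 / 2 * E / M := by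
  have hN0 : 0 < N := by linarith
  have hgap : (1 + 5 / 2 * E / M) * (M - 2 * E) - M = E * (M - 10 * E) / (2 * M) := by
    field_simp
    ring
  rw [div_le_iff₀ hN0]
  calc M ≤ (1 + 5 / 2 * E / M) * (M - 2 * E) := by
        rw [← sub_nonneg, hgap]
        exact div_nonneg (mul_nonneg hE (by linarith)) (by linarith)
    _ ≤ (1 + 5 / 2 * E / M) * N := by gcongr

lemma sqnormv_nonneg (v : Fin 2 → ℝ) : 0 ≤ sqnormv v :=
  Finset.sum_nonneg fun _ _ => sq_nonneg _

lemma sq_le_znorm_sq (k : Fin 2 → ℤ) (i : Fin 2) : (k i : ℝ) ^ 2 ≤ znorm k ^ 2 := by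
  rw [znorm, sq_sqrt (sqnormv_nonneg _), sqnormv]
  exact Finset.single_le_sum (f := fun j => (k j : ℝ) ^ 2) (fun _ _ => sq_nonneg _)
    (Finset.mem_univ i)

lemma one_le_znorm_sq {k : Fin 2 → ℤ} (hk : k ≠ 0) : 1 ≤ znorm k ^ 2 := by
  obtain ⟨i, hi⟩ := Function.ne_iff.mp hk
  have hki : (1 : ℝ) ≤ |(k i : ℝ)| := by exact_mod_cast Int.one_le_abs hi
  exact ((one_le_sq_iff_one_le_abs _).mpr hki).trans (sq_le_znorm_sq k i)

lemma totalMass_nonneg (c : (Fin 2 → ℤ) → ℂ) : 0 ≤ totalMass c :=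
  tsum_nonneg fun _ => sq_nonneg _

lemma H1sq_nonneg (c : (Fin 2 → ℤ) → ℂ) : 0 ≤ H1sq c :=
  tsum_nonneg fun _ => by positivity

lemma specVar_nonneg (c : (Fin 2 → ℤ) → ℂ) : 0 ≤ specVar c :=
  tsum_nonneg fun _ =>
    mul_nonneg (sqnormv_nonneg _) (div_nonneg (sq_nonneg _) (totalMass_nonneg c))

lemma summable_norm_sq_of_map_zero {c : (Fin 2 → ℤ) → ℂ} (hc0 : c 0 = 0)
    (h2 : Summable fun k => znorm k ^ 2 * ‖c k‖ ^ 2) : Summable fun k => ‖c k‖ ^ 2 := by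
  refine h2.of_nonneg_of_le (fun _ => sq_nonneg _) fun k => ?_
  rcases eq_or_ne k 0 with rfl | hk
  · simp [hc0]
  · exact le_mul_of_one_le_left (sq_nonneg _) (one_le_znorm_sq hk)

section Moments

variable {c : (Fin 2 → ℤ) → ℂ}

lemma summable_sq_sub_mul_norm_sq (h0 : Summable fun k => ‖c k‖ ^ 2)
    (h2 : Summable fun k => znorm k ^ 2 * ‖c k‖ ^ 2) (i : Fin 2) (r : ℝ) :
    Summable fun k : Fin 2 → ℤ => ((k i : ℝ) - r) ^ 2 * ‖c k‖ ^ 2 := by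
  refine ((h2.mul_left 2).add (h0.mul_left (2 * r ^ 2))).of_nonneg_of_le
    (fun _ => by positivity) fun k => ?_
  have hk : ((k i : ℝ) - r) ^ 2 ≤ 2 * znorm k ^ 2 + 2 * r ^ 2 := by
    nlinarith [sq_le_znorm_sq k i, sq_nonneg ((k i : ℝ) + r)]
  calc ((k i : ℝ) - r) ^ 2 * ‖c k‖ ^ 2 ≤ (2 * znorm k ^ 2 + 2 * r ^ 2) * ‖c k‖ ^ 2 := by gcongr
    _ = _ := by ring

lemma summable_mul_norm_sq (h0 : Summable fun k => ‖c k‖ ^ 2)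
    (h2 : Summable fun k => znorm k ^ 2 * ‖c k‖ ^ 2) (i : Fin 2) :
    Summable fun k : Fin 2 → ℤ => (k i : ℝ) * ‖c k‖ ^ 2 := by
  refine ((summable_sq_sub_mul_norm_sq h0 h2 i 0).add h0).of_norm_bounded fun k => ?_
  have hk : |(k i : ℝ)| ≤ (k i : ℝ) ^ 2 + 1 := by
    nlinarith [sq_abs (k i : ℝ), sq_nonneg (|(k i : ℝ)| - 1)]
  rw [norm_mul, norm_pow, norm_norm, Real.norm_eq_abs]
  nlinarith [sq_nonneg ‖c k‖]

noncomputable def specSecondMoment (c : (Fin 2 → ℤ) → ℂ) (t : Fin 2 → ℝ) : ℝ :=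
  ∑' k : Fin 2 → ℤ, sqnormv (fun i => (k i : ℝ) - t i) * specP c k

lemma specSecondMoment_eq (c : (Fin 2 → ℤ) → ℂ) (t : Fin 2 → ℝ) :
    specSecondMoment c t =
      (∑' k : Fin 2 → ℤ, sqnormv (fun i => (k i : ℝ) - t i) * ‖c k‖ ^ 2) / totalMass c := by
  simp only [specSecondMoment, specP, mul_div_assoc', tsum_div_const]

lemma specVar_le_specSecondMoment (hM : 0 < totalMass c) (h0 : Summable fun k => ‖c k‖ ^ 2)
    (h2 : Summable fun k => znorm k ^ 2 * ‖c k‖ ^ 2) (t : Fin 2 → ℝ) :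
    specVar c ≤ specSecondMoment c t := by
  have hP : HasSum (specP c) 1 := by
    have := (h0.div_const (totalMass c)).hasSum
    rwa [tsum_div_const, ← totalMass, div_self hM.ne'] at this
  have hlin (i : Fin 2) : Summable fun k : Fin 2 → ℤ => (k i : ℝ) * specP c k := by
    simpa only [specP, mul_div_assoc] using (summable_mul_norm_sq h0 h2 i).div_const (totalMass c)
  have hquad (i : Fin 2) (r : ℝ) :
      Summable fun k : Fin 2 → ℤ => ((k i : ℝ) - r) ^ 2 * specP c k := by
    simpa only [specP, mul_div_assoc] using
      (summable_sq_sub_mul_norm_sq h0 h2 i r).div_const (totalMass c)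
  rw [specVar, specSecondMoment, tsum_sqnormv_mul _ _ fun i => hquad i _,
    tsum_sqnormv_mul _ _ fun i => hquad i _]
  exact Finset.sum_le_sum fun i _ => tsum_sq_sub_mean_mul_le hP (hlin i) (hquad i _) (t i)

lemma specSecondMoment_le_of_norm_le {d : (Fin 2 → ℤ) → ℂ} (hdc : ∀ k, ‖d k‖ ≤ ‖c k‖)
    (hM : 0 < totalMass c) (h0 : Summable fun k => ‖c k‖ ^ 2)
    (h2 : Summable fun k => znorm k ^ 2 * ‖c k‖ ^ 2) (t : Fin 2 → ℝ) :
    specSecondMoment d t ≤ totalMass c / totalMass d * specSecondMoment c t := by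
  have hS := summable_sqnormv_mul _ _ fun i => summable_sq_sub_mul_norm_sq h0 h2 i (t i)
  have hmono : ∑' k : Fin 2 → ℤ, sqnormv (fun i => (k i : ℝ) - t i) * ‖d k‖ ^ 2 ≤
      ∑' k : Fin 2 → ℤ, sqnormv (fun i => (k i : ℝ) - t i) * ‖c k‖ ^ 2 :=
    (summable_mul_norm_sq_of_norm_le (fun _ => sqnormv_nonneg _) hdc hS).tsum_le_tsum
      (fun k => mul_le_mul_of_nonneg_left (pow_le_pow_left₀ (norm_nonneg _) (hdc k) 2)
        (sqnormv_nonneg _)) hS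
  rw [specSecondMoment_eq, specSecondMoment_eq, div_mul_div_comm, mul_comm (totalMass c),
    mul_div_mul_right _ _ hM.ne']
  exact div_le_div_of_nonneg_right hmono (totalMass_nonneg d)

end Moments

noncomputable def heatSemigroup (κ : ℝ) (c : (Fin 2 → ℤ) → ℂ) : (Fin 2 → ℤ) → ℂ :=
  fun k => (heatMul κ k : ℂ) * c k

lemma heatMul_le_one {κ : ℝ} (hκ : 0 ≤ κ) (k : Fin 2 → ℤ) : heatMul κ k ≤ 1 :=
  exp_le_one_iff.mpr (neg_nonpos.mpr (by positivity))

lemma one_sub_heatMul_sq_le (κ : ℝ) (k : Fin 2 → ℤ) :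
    1 - heatMul κ k ^ 2 ≤ 2 * κ * (4 * π ^ 2 * znorm k ^ 2) := by
  have hsq : heatMul κ k ^ 2 = exp (-(2 * κ * (4 * π ^ 2 * znorm k ^ 2))) := by
    rw [heatMul, sq, ← exp_add]
    ring_nf
  linarith [add_one_le_exp (-(2 * κ * (4 * π ^ 2 * znorm k ^ 2)))]

lemma norm_heatSemigroup (κ : ℝ) (c : (Fin 2 → ℤ) → ℂ) (k : Fin 2 → ℤ) :
    ‖heatSemigroup κ c k‖ = heatMul κ k * ‖c k‖ := by
  have hpos : 0 ≤ heatMul κ k := (exp_pos _).le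
  rw [heatSemigroup, norm_mul, Complex.norm_real, Real.norm_of_nonneg hpos]

lemma norm_heatSemigroup_le {κ : ℝ} (hκ : 0 ≤ κ) (c : (Fin 2 → ℤ) → ℂ) (k : Fin 2 → ℤ) :
    ‖heatSemigroup κ c k‖ ≤ ‖c k‖ := by
  rw [norm_heatSemigroup]
  exact mul_le_of_le_one_left (norm_nonneg _) (heatMul_le_one hκ k)

lemma totalMass_sub_heatSemigroup_le {c : (Fin 2 → ℤ) → ℂ} {κ : ℝ} (hκ : 0 ≤ κ)
    (h0 : Summable fun k => ‖c k‖ ^ 2) (h2 : Summable fun k => znorm k ^ 2 * ‖c k‖ ^ 2) :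
    totalMass c - totalMass (heatSemigroup κ c) ≤ 2 * κ * H1sq c := by
  have hheat : Summable fun k => ‖heatSemigroup κ c k‖ ^ 2 :=
    h0.of_nonneg_of_le (fun _ => sq_nonneg _) fun k =>
      pow_le_pow_left₀ (norm_nonneg _) (norm_heatSemigroup_le hκ c k) 2
  have hH1 : Summable fun k => 2 * κ * (4 * π ^ 2 * znorm k ^ 2 * ‖c k‖ ^ 2) :=
    (h2.mul_left (2 * κ * (4 * π ^ 2))).congr fun k => by ring
  rw [totalMass, totalMass, H1sq, ← h0.tsum_sub hheat, ← tsum_mul_left]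
  refine (h0.sub hheat).tsum_le_tsum (fun k => ?_) hH1
  calc ‖c k‖ ^ 2 - ‖heatSemigroup κ c k‖ ^ 2 = (1 - heatMul κ k ^ 2) * ‖c k‖ ^ 2 := by
        rw [norm_heatSemigroup]; ring
    _ ≤ 2 * κ * (4 * π ^ 2 * znorm k ^ 2) * ‖c k‖ ^ 2 := by
        gcongr; exact one_sub_heatMul_sq_le κ k
    _ = 2 * κ * (4 * π ^ 2 * znorm k ^ 2 * ‖c k‖ ^ 2) := by ring

/-- heat semigroup contracts spectral variance: there is an absolute
constant C such that for mean-zero nonzero φ ∈ H¹(𝕋²) and κ > 0 with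
κ‖φ‖_{H¹}²/‖φ‖² ≤ 1/10, one has
Var(X_{e^{κΔ}φ}) ≤ (‖φ‖²/‖e^{κΔ}φ‖²) Var(X_φ) ≤ (1 + Cκ‖φ‖_{H¹}²/‖φ‖²) Var(X_φ). -/
theorem heat_contracts_spectral_variance :
    ∃ C : ℝ, 0 < C ∧ ∀ (c : (Fin 2 → ℤ) → ℂ) (κ : ℝ), 0 < κ →
      c 0 = 0 → 0 < totalMass c →
      (Summable fun k : Fin 2 → ℤ => znorm k ^ 2 * ‖c k‖ ^ 2) →
      κ * H1sq c / totalMass c ≤ 1 / 10 →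
      specVar (fun k => (heatMul κ k : ℂ) * c k)
          ≤ (totalMass c / totalMass (fun k => (heatMul κ k : ℂ) * c k)) * specVar c
      ∧ (totalMass c / totalMass (fun k => (heatMul κ k : ℂ) * c k)) * specVar c
          ≤ (1 + C * κ * H1sq c / totalMass c) * specVar c := by
  refine ⟨5 / 2, by norm_num, fun c κ hκ hc0 hM h2 hsmall => ?_⟩
  have h0 := summable_norm_sq_of_map_zero hc0 h2
  have hdom := norm_heatSemigroup_le hκ.le c
  have h2' := summable_mul_norm_sq_of_norm_le (fun _ => sq_nonneg _) hdom h2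
  have hE : 0 ≤ κ * H1sq c := mul_nonneg hκ.le (H1sq_nonneg c)
  have hEM : 10 * (κ * H1sq c) ≤ totalMass c := by
    rw [div_le_iff₀ hM] at hsmall
    linarith
  have henergy := totalMass_sub_heatSemigroup_le hκ.le h0 h2
  have hMκ : 0 < totalMass (heatSemigroup κ c) := by linarith
  have hratio := div_le_one_add_of_sub_le hM hE hEM (by linarith)
  rw [← mul_assoc] at hratio
  refine ⟨?_, mul_le_mul_of_nonneg_right hratio (specVar_nonneg c)⟩
  calc specVar (heatSemigroup κ c)
      ≤ specSecondMoment (heatSemigroup κ c) (specMean c) :=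
        specVar_le_specSecondMoment hMκ
          (summable_norm_sq_of_map_zero (by simp [heatSemigroup, hc0]) h2')
          h2' (specMean c)
    _ ≤ totalMass c / totalMass (heatSemigroup κ c) * specSecondMoment c (specMean c) :=
        specSecondMoment_le_of_norm_le hdom hM h0 h2 (specMean c)
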